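/- (Corollary: generalization error bound with the path-norm proxy for ReLU networks.) Let ν be a probability measure on ℝ^{d_0} such that ν-almost every x satisfies x_i ∈ [0, 1] for every coordinate i. Let q (the ground-truth conditional label distribution) and p_1, …, p_N (the N clients' conditional label distributions) be conditional label distributions over ν, let n_1, …, n_N > 0 with n = ∑_{k=1}^{N} n_k, and let the classifier be the output map x ↦ (f_1(x; θ), …, f_C(x; θ)) of an L-layer ReLU network with parameters θ and d_{L+1} = C output nodes. Then | ∑_{k=1}^{N} (n_k/n) L(f(·; θ), p_k) − L(f(·; θ), q) | ≤ ‖f(·; θ)‖_pnp · ∑_{k=1}^{N} (n_k/n) ∫ ∑_{i=1}^{C} | p_k x i − q x i | dν(x). -/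

import Mathlib

/-! Both label distributions have total mass one, so the log-partition term of the
cross-entropy cancels in `L(f, p) - L(f, q)`, which becomes `∫ ∑ᵢ (q x i - p x i) f x i dν`
and is therefore at most `sup |fᵢ| · ∫ ∑ᵢ |p x i - q x i| dν`. On `[-1, 1]^{d_0}` every
output of a ReLU network is bounded by the path-norm proxy: since `|σ t| ≤ |t|`, unrolling
the layer recursion bounds `|f_k(x)|` by the sum over paths ending at `k` of the products of
absolute weights. Averaging the per-client bounds with the weights `n_k / n` gives the
corollary. -/

open MeasureTheory Real Finset

/-- Pre-activations of a ReLU network with layer widths `d` and parameters `θ`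
(`θ l i j` is the weight of the edge from node `i` of layer `l` to node `j` of
layer `l+1`) on input `x`.  `preact d θ x l` is the pre-activation vector
`a_{l+1}` of layer `l+1` (paper indexing): `a_1 j = ∑ i, θ 0 i j * x i` and
`a_{l+2} j = ∑ i, θ (l+1) i j * σ (a_{l+1} i)` where `σ t = max 0 t` is ReLU.
For an `L`-layer network (`L ≥ 1`) the `k`-th output is
`f_k(x; θ) = ∑ i, θ L i k * σ (a_L i) = preact d θ x L k`. -/
noncomputable def preact (d : ℕ → ℕ) (θ : ∀ l : ℕ, Fin (d l) → Fin (d (l + 1)) → ℝ)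
    (x : Fin (d 0) → ℝ) : (l : ℕ) → Fin (d (l + 1)) → ℝ
  | 0 => fun j => ∑ i, θ 0 i j * x i
  | (l + 1) => fun j => ∑ i, θ (l + 1) i j * max 0 (preact d θ x l i)

/-- The path-norm proxy of an `L`-layer ReLU network:
`‖f(·; θ)‖_pnp = ∑_{(i_0, …, i_{L+1})} ∏_{l=0}^{L} |θ_l(i_l, i_{l+1})|`,
the sum ranging over all paths through the network. -/
noncomputable def pathNormProxy (L : ℕ) (d : ℕ → ℕ)
    (θ : ∀ l : ℕ, Fin (d l) → Fin (d (l + 1)) → ℝ) : ℝ :=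
  ∑ i : (l : Fin (L + 2)) → Fin (d l), ∏ l : Fin (L + 1), |θ l (i l.castSucc) (i l.succ)|

/-- The cross-entropy loss of classifier `f` at point `(x, i)`:
`ℓ_f(x, i) = log (∑ r, exp (f x r)) − f x i`. -/
noncomputable def crossEntropyLoss {𝒳 : Type*} {C : ℕ} (f : 𝒳 → Fin C → ℝ)
    (x : 𝒳) (i : Fin C) : ℝ :=
  Real.log (∑ r, Real.exp (f x r)) - f x i

/-- The risk of classifier `f` under feature distribution `ν` and conditional label
distribution `p`: `L(f, p) = ∫ ∑ i, p x i · ℓ_f(x, i) dν(x)`. -/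
noncomputable def risk {𝒳 : Type*} [MeasurableSpace 𝒳] {C : ℕ} (ν : Measure 𝒳)
    (f : 𝒳 → Fin C → ℝ) (p : 𝒳 → Fin C → ℝ) : ℝ :=
  ∫ x, ∑ i, p x i * crossEntropyLoss f x i ∂ν

theorem abs_sum_mul_sub_le {ι : Type*} (s : Finset ι) {w a : ι → ℝ} (b : ℝ)
    (hw₀ : ∀ k ∈ s, 0 ≤ w k) (hw₁ : ∑ k ∈ s, w k = 1) :
    |∑ k ∈ s, w k * a k - b| ≤ ∑ k ∈ s, w k * |a k - b| := by
  have h : ∑ k ∈ s, w k * a k - b = ∑ k ∈ s, w k * (a k - b) := by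
    simp only [mul_sub, sum_sub_distrib, ← sum_mul, hw₁, one_mul]
  rw [h]
  refine (abs_sum_le_sum_abs _ _).trans (le_of_eq (sum_congr rfl fun k hk => ?_))
  rw [abs_mul, abs_of_nonneg (hw₀ k hk)]

section ReLUNetwork

variable (d : ℕ → ℕ) (θ : ∀ l : ℕ, Fin (d l) → Fin (d (l + 1)) → ℝ)

noncomputable def pathNormTo : (l : ℕ) → Fin (d (l + 1)) → ℝ
  | 0 => fun j => ∑ i, |θ 0 i j|
  | (l + 1) => fun j => ∑ i, |θ (l + 1) i j| * pathNormTo l i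

theorem pathNormTo_nonneg (l : ℕ) (j : Fin (d (l + 1))) : 0 ≤ pathNormTo d θ l j := by
  induction l with
  | zero => exact sum_nonneg fun i _ => abs_nonneg _
  | succ l ih => exact sum_nonneg fun i _ => mul_nonneg (abs_nonneg _) (ih i)

theorem abs_preact_le_pathNormTo {x : Fin (d 0) → ℝ} (hx : ∀ i, |x i| ≤ 1) (l : ℕ)
    (j : Fin (d (l + 1))) : |preact d θ x l j| ≤ pathNormTo d θ l j := by
  induction l with
  | zero =>
    refine (abs_sum_le_sum_abs _ _).trans (sum_le_sum fun i _ => ?_)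
    rw [abs_mul]
    exact mul_le_of_le_one_right (abs_nonneg _) (hx i)
  | succ l ih =>
    refine (abs_sum_le_sum_abs _ _).trans (sum_le_sum fun i _ => ?_)
    rw [abs_mul, abs_of_nonneg (le_max_left (0 : ℝ) (preact d θ x l i))]
    gcongr
    exact max_le (pathNormTo_nonneg d θ l i) ((le_abs_self _).trans (ih i))

theorem prod_abs_snoc_path (m : ℕ) (i : (l : Fin (m + 1)) → Fin (d l)) (e : Fin (d (m + 1))) :
    ∏ l : Fin (m + 1), |θ l (Fin.snocEquiv (fun l : Fin (m + 2) => Fin (d l)) (e, i) l.castSucc)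
        (Fin.snocEquiv (fun l : Fin (m + 2) => Fin (d l)) (e, i) l.succ)|
      = (∏ l : Fin m, |θ l (i l.castSucc) (i l.succ)|) * |θ m (i (Fin.last m)) e| := by
  simp only [Fin.snocEquiv, Equiv.coe_fn_mk, Fin.prod_univ_castSucc, Fin.succ_castSucc,
    Fin.snoc_castSucc, Fin.succ_last, Fin.snoc_last, Fin.val_castSucc, Fin.val_last]

theorem sum_prod_abs_paths_to (m : ℕ) (e : Fin (d (m + 1))) :
    ∑ i : (l : Fin (m + 1)) → Fin (d l),
        (∏ l : Fin m, |θ l (i l.castSucc) (i l.succ)|) * |θ m (i (Fin.last m)) e|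
      = pathNormTo d θ m e := by
  induction m with
  | zero =>
    rw [← (Equiv.piUnique fun l : Fin 1 => Fin (d l)).symm.sum_comp]
    simp only [Equiv.piUnique_symm_apply, Fin.prod_univ_zero, one_mul, pathNormTo]
    rfl
  | succ m ih =>
    rw [← (Fin.snocEquiv fun l : Fin (m + 2) => Fin (d l)).sum_comp, Fintype.sum_prod_type,
      pathNormTo]
    refine sum_congr rfl fun j _ => ?_
    rw [← ih j, mul_sum]
    refine sum_congr rfl fun i _ => ?_
    rw [prod_abs_snoc_path, Fin.snocEquiv_apply, Fin.snoc_last, mul_comm]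

theorem pathNormProxy_eq_sum_pathNormTo (L : ℕ) :
    pathNormProxy L d θ = ∑ j, pathNormTo d θ L j := by
  rw [pathNormProxy, ← (Fin.snocEquiv fun l : Fin (L + 2) => Fin (d l)).sum_comp,
    Fintype.sum_prod_type]
  refine sum_congr rfl fun j _ => ?_
  rw [← sum_prod_abs_paths_to]
  exact sum_congr rfl fun i _ => prod_abs_snoc_path d θ L i j

theorem abs_preact_le_pathNormProxy {x : Fin (d 0) → ℝ} (hx : ∀ i, |x i| ≤ 1) (L : ℕ)
    (j : Fin (d (L + 1))) : |preact d θ x L j| ≤ pathNormProxy L d θ := by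
  rw [pathNormProxy_eq_sum_pathNormTo]
  exact (abs_preact_le_pathNormTo d θ hx L j).trans
    (single_le_sum (fun k _ => pathNormTo_nonneg d θ L k) (mem_univ j))

theorem measurable_preact (l : ℕ) (j : Fin (d (l + 1))) :
    Measurable fun x => preact d θ x l j := by
  induction l with
  | zero => exact measurable_sum _ fun i _ => (measurable_pi_apply i).const_mul _
  | succ l ih =>
    exact measurable_sum _ fun i _ => (measurable_const.max (ih i)).const_mul _

end ReLUNetwork

section CrossEntropy

variable {𝒳 : Type*} {C : ℕ} (f : 𝒳 → Fin C → ℝ) (x : 𝒳)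

theorem crossEntropyLoss_nonneg (i : Fin C) : 0 ≤ crossEntropyLoss f x i := by
  have h : exp (f x i) ≤ ∑ r, exp (f x r) :=
    single_le_sum (fun r _ => (exp_pos _).le) (mem_univ i)
  rw [crossEntropyLoss, sub_nonneg, ← log_exp (f x i)]
  exact log_le_log (exp_pos _) h

theorem crossEntropyLoss_le {B : ℝ} (hB : ∀ r, |f x r| ≤ B) (i : Fin C) :
    crossEntropyLoss f x i ≤ log C + 2 * B := by
  have hC : (0 : ℝ) < C := by exact_mod_cast i.pos
  have hsum : ∑ r, exp (f x r) ≤ C * exp B := by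
    calc ∑ r, exp (f x r) ≤ ∑ _r : Fin C, exp B :=
          sum_le_sum fun r _ => exp_le_exp.2 ((le_abs_self _).trans (hB r))
      _ = C * exp B := by simp
  have hlog : log (∑ r, exp (f x r)) ≤ log C + B := by
    calc log (∑ r, exp (f x r)) ≤ log (C * exp B) :=
          log_le_log (sum_pos (fun r _ => exp_pos _) ⟨i, mem_univ i⟩) hsum
      _ = log C + B := by rw [log_mul hC.ne' (exp_pos B).ne', log_exp]
  have hfi := neg_le_of_abs_le (hB i)
  rw [crossEntropyLoss]
  linarith

theorem abs_crossEntropyLoss_le {B : ℝ} (hB : ∀ r, |f x r| ≤ B) (i : Fin C) :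
    |crossEntropyLoss f x i| ≤ log C + 2 * B := by
  rw [abs_of_nonneg (crossEntropyLoss_nonneg f x i)]
  exact crossEntropyLoss_le f x hB i

theorem sum_mul_crossEntropyLoss_sub_sum_mul {p q : Fin C → ℝ} (hp : ∑ i, p i = 1)
    (hq : ∑ i, q i = 1) :
    ∑ i, p i * crossEntropyLoss f x i - ∑ i, q i * crossEntropyLoss f x i
      = ∑ i, (q i - p i) * f x i := by
  simp only [crossEntropyLoss, mul_sub, sub_mul, sum_sub_distrib, ← sum_mul, hp, hq]
  ring

theorem measurable_crossEntropyLoss [MeasurableSpace 𝒳] (hf : ∀ r, Measurable fun x => f x r)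
    (i : Fin C) : Measurable fun x => crossEntropyLoss f x i :=
  ((measurable_sum _ fun r _ => (hf r).exp).log).sub (hf i)

end CrossEntropy

section Risk

variable {𝒳 : Type*} [MeasurableSpace 𝒳] {C : ℕ} {ν : Measure 𝒳}

structure IsCondLabelDistrib (ν : Measure 𝒳) (p : 𝒳 → Fin C → ℝ) : Prop where
  measurable : Measurable p
  nonneg : ∀ x i, 0 ≤ p x i
  sum_eq_one : ∀ᵐ x ∂ν, ∑ i, p x i = 1

namespace IsCondLabelDistrib

variable {p q : 𝒳 → Fin C → ℝ}

theorem measurable_apply (hp : IsCondLabelDistrib ν p) (i : Fin C) :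
    Measurable fun x => p x i :=
  (measurable_pi_apply i).comp hp.measurable

variable [IsFiniteMeasure ν]

theorem integrable_sum_mul (hp : IsCondLabelDistrib ν p) {g : 𝒳 → Fin C → ℝ} {M : ℝ}
    (hg : ∀ i, Measurable fun x => g x i) (hM : ∀ᵐ x ∂ν, ∀ i, |g x i| ≤ M) :
    Integrable (fun x => ∑ i, p x i * g x i) ν := by
  refine (integrable_const M).mono'
    (measurable_sum _ fun i _ => (hp.measurable_apply i).mul (hg i)).aestronglyMeasurable ?_
  filter_upwards [hM, hp.sum_eq_one] with x hx hsum
  calc ‖∑ i, p x i * g x i‖ ≤ ∑ i, |p x i * g x i| := abs_sum_le_sum_abs _ _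
    _ ≤ ∑ i, p x i * M := sum_le_sum fun i _ => by
        rw [abs_mul, abs_of_nonneg (hp.nonneg x i)]
        exact mul_le_mul_of_nonneg_left (hx i) (hp.nonneg x i)
    _ = M := by rw [← sum_mul, hsum, one_mul]

theorem integrable_sum_abs_sub (hp : IsCondLabelDistrib ν p) (hq : IsCondLabelDistrib ν q) :
    Integrable (fun x => ∑ i, |p x i - q x i|) ν := by
  refine (integrable_const (2 : ℝ)).mono' (measurable_sum _ fun i _ =>
    ((hp.measurable_apply i).sub (hq.measurable_apply i)).abs).aestronglyMeasurable ?_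
  filter_upwards [hp.sum_eq_one, hq.sum_eq_one] with x hpx hqx
  rw [norm_of_nonneg (sum_nonneg fun i _ => abs_nonneg _)]
  calc ∑ i, |p x i - q x i| ≤ ∑ i, (p x i + q x i) := sum_le_sum fun i _ =>
        abs_sub_le_of_nonneg_of_le (hp.nonneg x i) (le_add_of_nonneg_right (hq.nonneg x i))
          (hq.nonneg x i) (le_add_of_nonneg_left (hp.nonneg x i))
    _ = 2 := by rw [sum_add_distrib, hpx, hqx]; norm_num

end IsCondLabelDistrib

theorem abs_risk_sub_risk_le [IsFiniteMeasure ν] {f : 𝒳 → Fin C → ℝ} {B : ℝ}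
    (hf : ∀ r, Measurable fun x => f x r) (hB : ∀ᵐ x ∂ν, ∀ r, |f x r| ≤ B)
    {p q : 𝒳 → Fin C → ℝ} (hp : IsCondLabelDistrib ν p) (hq : IsCondLabelDistrib ν q) :
    |risk ν f p - risk ν f q| ≤ B * ∫ x, ∑ i, |p x i - q x i| ∂ν := by
  have hloss : ∀ᵐ x ∂ν, ∀ i, |crossEntropyLoss f x i| ≤ log C + 2 * B := by
    filter_upwards [hB] with x hx i using abs_crossEntropyLoss_le f x hx i
  have hℓ := measurable_crossEntropyLoss f hf
  rw [risk, risk, ← integral_sub (hp.integrable_sum_mul hℓ hloss)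
    (hq.integrable_sum_mul hℓ hloss), ← integral_const_mul, ← Real.norm_eq_abs]
  refine norm_integral_le_of_norm_le ((hp.integrable_sum_abs_sub hq).const_mul B) ?_
  filter_upwards [hB, hp.sum_eq_one, hq.sum_eq_one] with x hx hpx hqx
  rw [Real.norm_eq_abs, sum_mul_crossEntropyLoss_sub_sum_mul f x hpx hqx, mul_sum]
  refine (abs_sum_le_sum_abs _ _).trans (sum_le_sum fun i _ => ?_)
  rw [abs_mul, abs_sub_comm, mul_comm]
  exact mul_le_mul_of_nonneg_right (hx i) (abs_nonneg _)

end Risk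

theorem generalization_error_bound_pathNormProxy_general
    (L : ℕ) (d : ℕ → ℕ)
    (θ : ∀ l : ℕ, Fin (d l) → Fin (d (l + 1)) → ℝ)
    (ν : Measure (Fin (d 0) → ℝ)) [IsProbabilityMeasure ν]
    (hν : ∀ᵐ x ∂ν, ∀ i, x i ∈ Set.Icc (0 : ℝ) 1)
    (N : ℕ) (hN : 1 ≤ N)
    (p : Fin N → (Fin (d 0) → ℝ) → Fin (d (L + 1)) → ℝ)
    (q : (Fin (d 0) → ℝ) → Fin (d (L + 1)) → ℝ)
    (hpm : ∀ k, Measurable (p k)) (hqm : Measurable q)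
    (hp0 : ∀ k x i, 0 ≤ p k x i) (hq0 : ∀ x i, 0 ≤ q x i)
    (hp1 : ∀ k, ∀ᵐ x ∂ν, ∑ i, p k x i = 1) (hq1 : ∀ᵐ x ∂ν, ∑ i, q x i = 1)
    (n : Fin N → ℕ) (hn : ∀ k, 0 < n k) :
    |∑ k, ((n k : ℝ) / (∑ j, (n j : ℝ))) * risk ν (fun x => preact d θ x L) (p k)
        - risk ν (fun x => preact d θ x L) q|
      ≤ pathNormProxy L d θ * ∑ k, ((n k : ℝ) / (∑ j, (n j : ℝ))) *
          ∫ x, ∑ i, |p k x i - q x i| ∂ν := by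
  set f := fun x => preact d θ x L
  set w : Fin N → ℝ := fun k => (n k : ℝ) / ∑ j, (n j : ℝ)
  have hn_sum : 0 < ∑ j, (n j : ℝ) :=
    sum_pos (fun k _ => by exact_mod_cast hn k) ⟨⟨0, hN⟩, mem_univ _⟩
  have hw : ∑ k, w k = 1 := by rw [← sum_div, div_self hn_sum.ne']
  have hB : ∀ᵐ x ∂ν, ∀ j, |preact d θ x L j| ≤ pathNormProxy L d θ := by
    filter_upwards [hν] with x hx j
    exact abs_preact_le_pathNormProxy d θ
      (fun i => abs_le.2 ⟨by linarith [(hx i).1], (hx i).2⟩) L j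
  have hrisk (k : Fin N) := abs_risk_sub_risk_le (measurable_preact d θ L) hB
    ⟨hpm k, hp0 k, hp1 k⟩ ⟨hqm, hq0, hq1⟩
  calc _ ≤ ∑ k, w k * |risk ν f (p k) - risk ν f q| :=
        abs_sum_mul_sub_le _ _ (fun k _ => by positivity) hw
    _ ≤ ∑ k, w k * (pathNormProxy L d θ * ∫ x, ∑ i, |p k x i - q x i| ∂ν) := by
        gcongr with k
        exact hrisk k
    _ = _ := by rw [mul_sum]; exact sum_congr rfl fun k _ => mul_left_comm _ _ _

/-- **Corollary (generalization error bound with the path-norm proxy for ReLU networks).**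
The common feature distribution `ν` is supported on `[0,1]^{d_0}`; the classifier is the
output map of an `L`-layer ReLU network with parameters `θ` and `C = d (L+1)` output
nodes.  The generalization error of the global model is bounded by the path-norm proxy
times the weighted total label-noise term. -/
theorem generalization_error_bound_pathNormProxy
    (L : ℕ) (hL : 1 ≤ L) (d : ℕ → ℕ) (hC : 1 ≤ d (L + 1))
    (θ : ∀ l : ℕ, Fin (d l) → Fin (d (l + 1)) → ℝ)
    (ν : Measure (Fin (d 0) → ℝ)) [IsProbabilityMeasure ν]
    (hν : ∀ᵐ x ∂ν, ∀ i, x i ∈ Set.Icc (0 : ℝ) 1)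
    (N : ℕ) (hN : 1 ≤ N)
    (p : Fin N → (Fin (d 0) → ℝ) → Fin (d (L + 1)) → ℝ)
    (q : (Fin (d 0) → ℝ) → Fin (d (L + 1)) → ℝ)
    (hpm : ∀ k, Measurable (p k)) (hqm : Measurable q)
    (hp0 : ∀ k x i, 0 ≤ p k x i) (hq0 : ∀ x i, 0 ≤ q x i)
    (hp1 : ∀ k, ∀ᵐ x ∂ν, ∑ i, p k x i = 1) (hq1 : ∀ᵐ x ∂ν, ∑ i, q x i = 1)
    (n : Fin N → ℕ) (hn : ∀ k, 0 < n k) :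
    |∑ k, ((n k : ℝ) / (∑ j, (n j : ℝ))) * risk ν (fun x => preact d θ x L) (p k)
        - risk ν (fun x => preact d θ x L) q|
      ≤ pathNormProxy L d θ * ∑ k, ((n k : ℝ) / (∑ j, (n j : ℝ))) *
          ∫ x, ∑ i, |p k x i - q x i| ∂ν :=
  generalization_error_bound_pathNormProxy_general L d θ ν hν N hN p q hpm hqm hp0 hq0 hp1 hq1 n hn
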